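/- arXiv:1701.03908 — 4 statements merged into one kernel-verified Lean document; each statement's English description precedes it below -/
import Mathlib

section
/- With M = [[−H̃, −L⊗I_m],[L⊗I_m, 0]] where H̃ is PSD and L is symmetric, if λ = ir (r ∈ ℝ, r ≠ 0) is a purely imaginary eigenvalue of M with eigenvector β = [β_a; β_b], then H̃β_a = 0, (L⊗I_m)β_b = −ir β_a, and (L⊗I_m)β_a = ir β_b. -/
open Matrix Kronecker
open scoped ComplexOrder

/-!
Write `A = H̃`, `K = L ⊗ I_m` and `c = i r`. The eigen-equation splits into
`A β_a + K β_b = -c β_a` and `K β_a = c β_b`. Since `K` is Hermitian and `c̄ = -c`,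
`β_a* A β_a = c (‖β_b‖² - ‖β_a‖²)`, which is both real (as `A ⪰ 0`) and purely imaginary,
hence zero; for a positive semidefinite `A` this forces `A β_a = 0`.
-/

namespace Matrix

theorem IsHermitian.kronecker {R n o : Type*} [CommRing R] [StarRing R] {A : Matrix n n R}
    {B : Matrix o o R} (hA : A.IsHermitian) (hB : B.IsHermitian) : (A ⊗ₖ B).IsHermitian := by
  rw [IsHermitian, conjTranspose_kronecker, hA.eq, hB.eq]

variable {n : Type*} [Fintype n]

theorem PosSemidef.map_ofReal {𝕜 : Type*} [RCLike 𝕜] {A : Matrix n n ℝ} (hA : A.PosSemidef) :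
    (A.map ((↑) : ℝ → 𝕜)).PosSemidef := by
  classical
  open scoped MatrixOrder in
  obtain ⟨B, rfl⟩ := CStarAlgebra.nonneg_iff_eq_star_mul_self.mp hA.nonneg
  change ((star B * B).map (algebraMap ℝ 𝕜)).PosSemidef
  rw [star_eq_conjTranspose, Matrix.map_mul,
    conjTranspose_map _ fun x ↦ (RCLike.conj_ofReal x).symm]
  exact posSemidef_conjTranspose_mul_self _

theorem fromBlocks_neg_mulVec_eq_smul_iff {α : Type*} [Ring α] {A K : Matrix n n α} {c : α}
    {x y : n → α} :
    fromBlocks (-A) (-K) K 0 *ᵥ Sum.elim x y = c • Sum.elim x y ↔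
      A *ᵥ x + K *ᵥ y = -c • x ∧ K *ᵥ x = c • y := by
  rw [fromBlocks_mulVec, ← Sum.elim_comp_inl_inr (c • Sum.elim x y), Sum.elim_eq_iff]
  simp only [Sum.elim_comp_inl, Sum.elim_comp_inr, zero_mulVec, add_zero, neg_mulVec, ← neg_add,
    neg_eq_iff_eq_neg, neg_smul]
  exact Iff.rfl

theorem PosSemidef.mulVec_eq_zero_of_skew_eigen {𝕜 : Type*} [RCLike 𝕜] {A K : Matrix n n 𝕜}
    (hA : A.PosSemidef) (hK : K.IsHermitian) {c : 𝕜} (hc : star c = -c) {x y : n → 𝕜}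
    (h₁ : A *ᵥ x + K *ᵥ y = -c • x) (h₂ : K *ᵥ x = c • y) : A *ᵥ x = 0 := by
  have hq : star x ⬝ᵥ A *ᵥ x = c * (star y ⬝ᵥ y - star x ⬝ᵥ x) := by
    have hKxy : star x ⬝ᵥ K *ᵥ y = star (K *ᵥ x) ⬝ᵥ y := by
      rw [star_mulVec, hK.eq, dotProduct_mulVec]
    rw [eq_sub_of_add_eq h₁, dotProduct_sub, hKxy, h₂, star_smul, hc]
    simp only [dotProduct_smul, smul_dotProduct, smul_eq_mul]
    ring
  have hskew : star (star x ⬝ᵥ A *ᵥ x) = -(star x ⬝ᵥ A *ᵥ x) := by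
    rw [hq, star_mul', hc, star_sub, ← star_dotProduct, ← star_dotProduct, neg_mul]
  refine (hA.dotProduct_mulVec_zero_iff x).mp <| self_eq_neg.mp ?_
  rw [← hskew, (IsSelfAdjoint.of_nonneg (hA.dotProduct_mulVec_nonneg x)).star_eq]

end Matrix

theorem stmt_4_general {N m : ℕ} (L : Matrix (Fin N) (Fin N) ℝ) (hL : L.IsSymm)
    (Htil : Matrix (Fin N × Fin m) (Fin N × Fin m) ℝ) (hHtil : Htil.PosSemidef)
    (r : ℝ) (βa βb : Fin N × Fin m → ℂ)
    (heig : ((Matrix.fromBlocks (-Htil)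
        (-(L ⊗ₖ (1 : Matrix (Fin m) (Fin m) ℝ)))
        (L ⊗ₖ (1 : Matrix (Fin m) (Fin m) ℝ)) 0).map Complex.ofReal).mulVec
          (Sum.elim βa βb)
        = ((r : ℂ) * Complex.I) • Sum.elim βa βb) :
    (Htil.map Complex.ofReal).mulVec βa = 0 ∧
    ((L ⊗ₖ (1 : Matrix (Fin m) (Fin m) ℝ)).map Complex.ofReal).mulVec βb
      = (-(r : ℂ) * Complex.I) • βa ∧
    ((L ⊗ₖ (1 : Matrix (Fin m) (Fin m) ℝ)).map Complex.ofReal).mulVec βa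
      = ((r : ℂ) * Complex.I) • βb := by
  have hK : ((L ⊗ₖ (1 : Matrix (Fin m) (Fin m) ℝ)).map Complex.ofReal).IsHermitian :=
    ((isHermitian_iff_isSymm.mpr hL).kronecker isHermitian_one).map _
      fun x ↦ (Complex.conj_ofReal x).symm
  have hc : star ((r : ℂ) * Complex.I) = -((r : ℂ) * Complex.I) := by simp
  rw [fromBlocks_map, Matrix.map_neg _ Complex.ofReal_neg, Matrix.map_neg _ Complex.ofReal_neg,
    Matrix.map_zero _ Complex.ofReal_zero, fromBlocks_neg_mulVec_eq_smul_iff] at heig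
  obtain ⟨h₁, h₂⟩ := heig
  have hHβa : (Htil.map Complex.ofReal).mulVec βa = 0 :=
    (hHtil.map_ofReal (𝕜 := ℂ)).mulVec_eq_zero_of_skew_eigen hK hc h₁ h₂
  refine ⟨hHβa, ?_, h₂⟩
  rwa [hHβa, zero_add, ← neg_mul] at h₁

/-- If `M = [[-H̃, -L⊗I_m],[L⊗I_m, 0]]` with `H̃` PSD and `L` symmetric, and
`β = [β_a; β_b]` is an eigenvector of `M` with purely imaginary eigenvalue `i r` (`r ≠ 0`),
then `H̃ β_a = 0`, `(L⊗I_m) β_b = -i r β_a` and `(L⊗I_m) β_a = i r β_b`. -/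
theorem stmt_4 {N m : ℕ} (L : Matrix (Fin N) (Fin N) ℝ) (hL : L.IsSymm)
    (Htil : Matrix (Fin N × Fin m) (Fin N × Fin m) ℝ) (hHtil : Htil.PosSemidef)
    (r : ℝ) (hr : r ≠ 0) (βa βb : Fin N × Fin m → ℂ)
    (hβ : Sum.elim βa βb ≠ 0)
    (heig : ((Matrix.fromBlocks (-Htil)
        (-(L ⊗ₖ (1 : Matrix (Fin m) (Fin m) ℝ)))
        (L ⊗ₖ (1 : Matrix (Fin m) (Fin m) ℝ)) 0).map Complex.ofReal).mulVec
          (Sum.elim βa βb)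
        = ((r : ℂ) * Complex.I) • Sum.elim βa βb) :
    (Htil.map Complex.ofReal).mulVec βa = 0 ∧
    ((L ⊗ₖ (1 : Matrix (Fin m) (Fin m) ℝ)).map Complex.ofReal).mulVec βb
      = (-(r : ℂ) * Complex.I) • βa ∧
    ((L ⊗ₖ (1 : Matrix (Fin m) (Fin m) ℝ)).map Complex.ofReal).mulVec βa
      = ((r : ℂ) * Complex.I) • βb :=
  stmt_4_general L hL Htil hHtil r βa βb heig
end

section
/- Suppose there exists an eigenvector α of L with eigenvalue r > 0 such that dim span{h_i : α[i] ≠ 0} < m. Then M = [[−H̃, −L⊗I_m],[L⊗I_m, 0]] has a purely imaginary eigenvalue ir ≠ 0; specifically, if η ≠ 0 satisfies h_iᵀη = 0 for all i with α[i] ≠ 0, then β = [α⊗η; (L⊗I_m)(α⊗η)/(ir)] is an eigenvector of M with eigenvalue ir. -/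
/-!
The vector `v = α ⊗ η` satisfies `(L ⊗ I) v = r v` and, because `h iᵀ η = 0` wherever
`α i ≠ 0`, `H̃ v = 0`. For any `v` with `H v = 0` and `A (A v) = -μ² v`, `μ ≠ 0`, the vector
`(v, μ⁻¹ A v)` is an eigenvector of `[[-H, -A], [A, 0]]` with eigenvalue `μ`; with `A = L ⊗ I`
this holds for `μ = i r`.
-/

open Matrix Kronecker

namespace Matrix

variable {ι n p R : Type*} [Fintype n] [Fintype p]

theorem kronecker_one_mulVec_prod [CommSemiring R] [DecidableEq p] (A : Matrix n n R)
    (u : n → R) (v : p → R) :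
    (A ⊗ₖ (1 : Matrix p p R)) *ᵥ (fun q => u q.1 * v q.2) = fun q => (A *ᵥ u) q.1 * v q.2 := by
  ext ⟨i, a⟩
  simp only [mulVec, dotProduct, Fintype.sum_prod_type, kroneckerMap_apply, one_apply,
    mul_ite, mul_one, mul_zero, ite_mul, zero_mul, Finset.sum_ite_eq, Finset.mem_univ,
    if_true, Finset.sum_mul, mul_assoc]

theorem mulVec_prod_eq_zero_of_apply_eq_ite [CommSemiring R] [DecidableEq n]
    (H : Matrix (n × p) (n × p) R) (h : n → p → R)
    (hH : ∀ q q', H q q' = if q.1 = q'.1 then h q.1 q.2 * h q.1 q'.2 else 0)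
    (u : n → R) (v : p → R) (horth : ∀ i, u i ≠ 0 → h i ⬝ᵥ v = 0) :
    H *ᵥ (fun q => u q.1 * v q.2) = 0 := by
  ext ⟨i, a⟩
  simp only [mulVec, dotProduct, Fintype.sum_prod_type, hH, ite_mul, zero_mul, Pi.zero_apply]
  rw [Finset.sum_comm]
  simp only [Finset.sum_ite_eq, Finset.mem_univ, if_true]
  rcases eq_or_ne (u i) 0 with hu | hu
  · simp [hu]
  · rw [← mul_zero (h i a * u i), ← horth i hu, dotProduct, Finset.mul_sum]
    exact Finset.sum_congr rfl fun _ _ => by ring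

theorem fromBlocks_mulVec_eq_smul [Fintype ι] {K : Type*} [Field K] (H A : Matrix ι ι K)
    (v : ι → K) {μ : K} (hμ : μ ≠ 0) (hHv : H *ᵥ v = 0) (hAAv : A *ᵥ (A *ᵥ v) = -(μ ^ 2) • v) :
    fromBlocks (-H) (-A) A 0 *ᵥ Sum.elim v (μ⁻¹ • A *ᵥ v) = μ • Sum.elim v (μ⁻¹ • A *ᵥ v) := by
  rw [fromBlocks_mulVec]
  ext (i | i)
  · simp only [Sum.elim_comp_inl, Sum.elim_comp_inr, neg_mulVec, hHv, mulVec_smul, hAAv,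
      Pi.add_apply, Pi.neg_apply, Pi.smul_apply, Pi.zero_apply, Sum.elim_inl, smul_eq_mul]
    field_simp
    ring
  · simp [hμ]

theorem mem_spectrum_of_mulVec_eq_smul [Fintype ι] [DecidableEq ι] [CommRing R]
    {A : Matrix ι ι R} {x : ι → R} {μ : R} (hx : x ≠ 0) (hAx : A *ᵥ x = μ • x) :
    μ ∈ spectrum R A := by
  rw [← spectrum_toLin']
  exact (Module.End.hasEigenvalue_of_hasEigenvector
    ⟨Module.End.mem_eigenspace_iff.mpr (by rwa [toLin'_apply]), hx⟩).mem_spectrum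

theorem map_mulVec_eq_smul {S : Type*} [Fintype ι] [CommSemiring R] [CommSemiring S]
    (f : R →+* S) {M : Matrix ι ι R} {v : ι → R} {c : R} (hMv : M *ᵥ v = c • v) :
    M.map f *ᵥ (f ∘ v) = f c • (f ∘ v) := by
  ext i
  rw [← RingHom.map_mulVec, hMv]
  simp

end Matrix

theorem stmt_7_general {N m : ℕ} (L : Matrix (Fin N) (Fin N) ℝ)
    (h : Fin N → Fin m → ℝ)
    (Htil : Matrix (Fin N × Fin m) (Fin N × Fin m) ℝ)
    (hHtil : ∀ p q : Fin N × Fin m,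
      Htil p q = if p.1 = q.1 then h p.1 p.2 * h p.1 q.2 else 0)
    (r : ℝ) (hr : 0 < r) (α : Fin N → ℝ) (hα : α ≠ 0)
    (heig : L.mulVec α = r • α)
    (η : Fin m → ℝ) (hη : η ≠ 0)
    (horth : ∀ i, α i ≠ 0 → h i ⬝ᵥ η = 0) :
    Sum.elim (fun p : Fin N × Fin m => ((α p.1 * η p.2 : ℝ) : ℂ))
        (fun p : Fin N × Fin m =>
          (((r : ℂ) * Complex.I)⁻¹ •
            (((L ⊗ₖ (1 : Matrix (Fin m) (Fin m) ℝ)).map Complex.ofReal).mulVec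
              (fun q : Fin N × Fin m => ((α q.1 * η q.2 : ℝ) : ℂ)))) p) ≠ 0 ∧
    ((Matrix.fromBlocks (-Htil)
        (-(L ⊗ₖ (1 : Matrix (Fin m) (Fin m) ℝ)))
        (L ⊗ₖ (1 : Matrix (Fin m) (Fin m) ℝ)) 0).map Complex.ofReal).mulVec
      (Sum.elim (fun p : Fin N × Fin m => ((α p.1 * η p.2 : ℝ) : ℂ))
        (fun p : Fin N × Fin m =>
          (((r : ℂ) * Complex.I)⁻¹ •
            (((L ⊗ₖ (1 : Matrix (Fin m) (Fin m) ℝ)).map Complex.ofReal).mulVec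
              (fun q : Fin N × Fin m => ((α q.1 * η q.2 : ℝ) : ℂ)))) p))
      = ((r : ℂ) * Complex.I) •
        Sum.elim (fun p : Fin N × Fin m => ((α p.1 * η p.2 : ℝ) : ℂ))
          (fun p : Fin N × Fin m =>
            (((r : ℂ) * Complex.I)⁻¹ •
              (((L ⊗ₖ (1 : Matrix (Fin m) (Fin m) ℝ)).map Complex.ofReal).mulVec
                (fun q : Fin N × Fin m => ((α q.1 * η q.2 : ℝ) : ℂ)))) p) ∧
    ((r : ℂ) * Complex.I) ∈ spectrum ℂ ((Matrix.fromBlocks (-Htil)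
        (-(L ⊗ₖ (1 : Matrix (Fin m) (Fin m) ℝ)))
        (L ⊗ₖ (1 : Matrix (Fin m) (Fin m) ℝ)) 0).map Complex.ofReal) := by
  set v : Fin N × Fin m → ℝ := fun q => α q.1 * η q.2
  have hLv : (L ⊗ₖ (1 : Matrix (Fin m) (Fin m) ℝ)) *ᵥ v = r • v := by
    rw [kronecker_one_mulVec_prod, heig]
    ext q
    simp [v, mul_assoc]
  have hHv : Htil *ᵥ v = (0 : ℝ) • v := by
    rw [zero_smul]
    exact mulVec_prod_eq_zero_of_apply_eq_ite Htil h hHtil α η horth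
  have hv : v ≠ 0 := by
    obtain ⟨i, hi⟩ := Function.ne_iff.mp hα
    obtain ⟨a, ha⟩ := Function.ne_iff.mp hη
    exact Function.ne_iff.mpr ⟨(i, a), mul_ne_zero hi ha⟩
  set f := Complex.ofRealHom
  set A := (L ⊗ₖ (1 : Matrix (Fin m) (Fin m) ℝ)).map f
  set x := Sum.elim (f ∘ v) (((r : ℂ) * Complex.I)⁻¹ • A *ᵥ (f ∘ v))
  have hx : x ≠ 0 := fun hx0 =>
    hv (funext fun q => by simpa [x, f] using congrFun hx0 (Sum.inl q))
  have hAAv : A *ᵥ (A *ᵥ (f ∘ v)) = -(((r : ℂ) * Complex.I) ^ 2) • (f ∘ v) := by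
    rw [map_mulVec_eq_smul f hLv, mulVec_smul, map_mulVec_eq_smul f hLv, smul_smul]
    congr 1
    simp only [f, Complex.ofRealHom_eq_coe]
    linear_combination (r : ℂ) ^ 2 * Complex.I_sq
  have hMx : (fromBlocks (-Htil) (-(L ⊗ₖ (1 : Matrix (Fin m) (Fin m) ℝ)))
      (L ⊗ₖ (1 : Matrix (Fin m) (Fin m) ℝ)) 0).map f *ᵥ x = ((r : ℂ) * Complex.I) • x := by
    rw [fromBlocks_map, Matrix.map_neg _ (map_neg f), Matrix.map_neg _ (map_neg f),
      Matrix.map_zero _ (map_zero f)]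
    refine fromBlocks_mulVec_eq_smul _ A _ (by simp [hr.ne']) ?_ hAAv
    simpa using map_mulVec_eq_smul f hHv
  exact ⟨hx, hMx, mem_spectrum_of_mulVec_eq_smul hx hMx⟩

/-- If `L α = r α` with `r > 0` and there is `η ≠ 0` with `h iᵀ η = 0` whenever `α i ≠ 0`,
then `β = [α⊗η ; (L⊗I_m)(α⊗η)/(i r)]` is an eigenvector of
`M = [[-H̃, -L⊗I_m],[L⊗I_m, 0]]` with the purely imaginary eigenvalue `i r ≠ 0`. -/
theorem stmt_7 {N m : ℕ} (L : Matrix (Fin N) (Fin N) ℝ) (hL : L.IsSymm)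
    (h : Fin N → Fin m → ℝ)
    (Htil : Matrix (Fin N × Fin m) (Fin N × Fin m) ℝ)
    (hHtil : ∀ p q : Fin N × Fin m,
      Htil p q = if p.1 = q.1 then h p.1 p.2 * h p.1 q.2 else 0)
    (r : ℝ) (hr : 0 < r) (α : Fin N → ℝ) (hα : α ≠ 0)
    (heig : L.mulVec α = r • α)
    (η : Fin m → ℝ) (hη : η ≠ 0)
    (horth : ∀ i, α i ≠ 0 → h i ⬝ᵥ η = 0) :
    Sum.elim (fun p : Fin N × Fin m => ((α p.1 * η p.2 : ℝ) : ℂ))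
        (fun p : Fin N × Fin m =>
          (((r : ℂ) * Complex.I)⁻¹ •
            (((L ⊗ₖ (1 : Matrix (Fin m) (Fin m) ℝ)).map Complex.ofReal).mulVec
              (fun q : Fin N × Fin m => ((α q.1 * η q.2 : ℝ) : ℂ)))) p) ≠ 0 ∧
    ((Matrix.fromBlocks (-Htil)
        (-(L ⊗ₖ (1 : Matrix (Fin m) (Fin m) ℝ)))
        (L ⊗ₖ (1 : Matrix (Fin m) (Fin m) ℝ)) 0).map Complex.ofReal).mulVec
      (Sum.elim (fun p : Fin N × Fin m => ((α p.1 * η p.2 : ℝ) : ℂ))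
        (fun p : Fin N × Fin m =>
          (((r : ℂ) * Complex.I)⁻¹ •
            (((L ⊗ₖ (1 : Matrix (Fin m) (Fin m) ℝ)).map Complex.ofReal).mulVec
              (fun q : Fin N × Fin m => ((α q.1 * η q.2 : ℝ) : ℂ)))) p))
      = ((r : ℂ) * Complex.I) •
        Sum.elim (fun p : Fin N × Fin m => ((α p.1 * η p.2 : ℝ) : ℂ))
          (fun p : Fin N × Fin m =>
            (((r : ℂ) * Complex.I)⁻¹ •
              (((L ⊗ₖ (1 : Matrix (Fin m) (Fin m) ℝ)).map Complex.ofReal).mulVec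
                (fun q : Fin N × Fin m => ((α q.1 * η q.2 : ℝ) : ℂ)))) p) ∧
    ((r : ℂ) * Complex.I) ∈ spectrum ℂ ((Matrix.fromBlocks (-Htil)
        (-(L ⊗ₖ (1 : Matrix (Fin m) (Fin m) ℝ)))
        (L ⊗ₖ (1 : Matrix (Fin m) (Fin m) ℝ)) 0).map Complex.ofReal) :=
  stmt_7_general L h Htil hHtil r hr α hα heig η hη horth
end

section
/- Let L be the Laplacian of a connected graph on N nodes and h_i ∈ ℝ^m span ℝ^m (i.e., rank H = m where H has rows h_iᵀ). If δ = [δ_a; δ_b] satisfies Mδ = 0 with M = [[−H̃, −L⊗I_m],[L⊗I_m, 0]], then δ_a = 0 and δ_b = 1⊗η for some η ∈ ℝ^m; in particular the kernel of M has dimension m. -/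
/-!
Write `LK = L ⊗ I_m`. For a connected graph, `ker L` is spanned by the constant vector, so
`ker LK` consists of the vectors `1 ⊗ η`. The second block row gives `LK δ_a = 0`, hence
`δ_a = 1 ⊗ α`. Pairing the first block row with `δ_a` and using the symmetry of `LK` gives
`δ_aᵀ H̃ δ_a = -(LK δ_a)ᵀ δ_b = 0`, and `δ_aᵀ H̃ δ_a = ∑ i, (h_iᵀ α)²`; so `α` is orthogonal to
every `h_i`, hence zero since they span. Then `LK δ_b = 0`, so `δ_b = 1 ⊗ η`, and
`η ↦ (0, 1 ⊗ η)` is an isomorphism from `ℝ^m` onto `ker M`.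
-/

open Matrix BigOperators Kronecker

section KroneckerOne

variable {V ι R : Type*} [Fintype V] [Fintype ι] [DecidableEq ι]

theorem Matrix.kronecker_one_mulVec_apply [NonAssocSemiring R] (L : Matrix V V R)
    (x : V × ι → R) (i : V) (k : ι) :
    ((L ⊗ₖ (1 : Matrix ι ι R)) *ᵥ x) (i, k) = (L *ᵥ fun j => x (j, k)) i := by
  simp [mulVec, dotProduct, Fintype.sum_prod_type, one_apply]

theorem SimpleGraph.lapMatrix_kronecker_one_mulVec_eq_zero_iff [DecidableEq V]
    {G : SimpleGraph V} [DecidableRel G.Adj] (hG : G.Connected) (x : V × ι → ℝ) :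
    (G.lapMatrix ℝ ⊗ₖ (1 : Matrix ι ι ℝ)) *ᵥ x = 0 ↔ ∃ η : ι → ℝ, x = fun p => η p.2 := by
  have hslice : ∀ k, G.lapMatrix ℝ *ᵥ (fun j => x (j, k)) = 0 ↔
      ∀ i j, x (i, k) = x (j, k) := fun k => by
    simp only [lapMatrix_mulVec_eq_zero_iff_forall_reachable]
    exact ⟨fun hx i j => hx i j (hG.preconnected i j), fun hx i j _ => hx i j⟩
  have hsplit : (G.lapMatrix ℝ ⊗ₖ (1 : Matrix ι ι ℝ)) *ᵥ x = 0 ↔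
      ∀ k, G.lapMatrix ℝ *ᵥ (fun j => x (j, k)) = 0 := by
    simp only [funext_iff, Prod.forall, kronecker_one_mulVec_apply, Pi.zero_apply]
    exact forall_comm
  obtain ⟨i₀⟩ := hG.nonempty
  simp only [hsplit, hslice]
  refine ⟨fun hx => ⟨fun k => x (i₀, k), funext fun p => hx p.2 p.1 i₀⟩, ?_⟩
  rintro ⟨η, rfl⟩ k i j
  rfl

end KroneckerOne

theorem eq_zero_of_forall_dotProduct_eq_zero {ι n : Type*} [Fintype n] {v : ι → n → ℝ}
    (hv : Submodule.span ℝ (Set.range v) = ⊤) {α : n → ℝ} (hα : ∀ i, v i ⬝ᵥ α = 0) :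
    α = 0 := by
  have hf : dotProductBilin ℝ ℝ α = 0 :=
    LinearMap.ext_on_range hv fun i => by simpa [dotProduct_comm] using hα i
  simpa using LinearMap.congr_fun hf α

theorem dotProduct_mulVec_eq_sum_sq {V ι : Type*} [Fintype V] [Fintype ι] [DecidableEq V]
    (h : V → ι → ℝ) (Htil : Matrix (V × ι) (V × ι) ℝ)
    (hHtil : ∀ p q : V × ι, Htil p q = if p.1 = q.1 then h p.1 p.2 * h p.1 q.2 else 0)
    (x : V × ι → ℝ) :
    x ⬝ᵥ (Htil *ᵥ x) = ∑ i, (h i ⬝ᵥ fun k => x (i, k)) ^ 2 := by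
  simp only [dotProduct, mulVec, Fintype.sum_prod_type, hHtil, ite_mul, zero_mul,
    Finset.sum_ite_irrel, Finset.sum_const_zero, Finset.sum_ite_eq, Finset.mem_univ,
    if_true, sq, Finset.sum_mul, Finset.mul_sum]
  refine Finset.sum_congr rfl fun i _ => Finset.sum_comm.trans <| Finset.sum_congr rfl fun k _ =>
    Finset.sum_congr rfl fun l _ => ?_
  ring

theorem fromBlocks_lapMatrix_kronecker_mulVec_eq_zero_iff {V ι : Type*} [Fintype V]
    [DecidableEq V] [Fintype ι] [DecidableEq ι] {G : SimpleGraph V} [DecidableRel G.Adj]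
    (hG : G.Connected) {h : V → ι → ℝ} (hspan : Submodule.span ℝ (Set.range h) = ⊤)
    {Htil : Matrix (V × ι) (V × ι) ℝ}
    (hHtil : ∀ p q : V × ι, Htil p q = if p.1 = q.1 then h p.1 p.2 * h p.1 q.2 else 0)
    (δa δb : V × ι → ℝ) :
    fromBlocks (-Htil) (-(G.lapMatrix ℝ ⊗ₖ (1 : Matrix ι ι ℝ)))
        (G.lapMatrix ℝ ⊗ₖ (1 : Matrix ι ι ℝ)) 0 *ᵥ Sum.elim δa δb = 0 ↔
      δa = 0 ∧ ∃ η : ι → ℝ, δb = fun p => η p.2 := by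
  set LK := G.lapMatrix ℝ ⊗ₖ (1 : Matrix ι ι ℝ)
  have hLK : ∀ x, LK *ᵥ x = 0 ↔ ∃ η : ι → ℝ, x = fun p => η p.2 :=
    SimpleGraph.lapMatrix_kronecker_one_mulVec_eq_zero_iff hG
  have hLK_symm : LKᵀ = LK := by
    rw [← kroneckerMap_transpose, (G.isSymm_lapMatrix (R := ℝ)).eq, transpose_one]
  rw [fromBlocks_mulVec, ← Sum.elim_zero_zero, Sum.elim_eq_iff]
  simp only [Sum.elim_comp_inl, Sum.elim_comp_inr, neg_mulVec, zero_mulVec, add_zero, ← neg_add,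
    neg_eq_zero]
  constructor
  · rintro ⟨hsum, hδa⟩
    obtain ⟨α, rfl⟩ := (hLK _).1 hδa
    have hquad : (fun p => α p.2) ⬝ᵥ (Htil *ᵥ fun p => α p.2) = 0 := by
      rw [eq_neg_of_add_eq_zero_left hsum, dotProduct_neg, dotProduct_mulVec,
        ← mulVec_transpose, hLK_symm, hδa, zero_dotProduct, neg_zero]
    rw [dotProduct_mulVec_eq_sum_sq h Htil hHtil,
      Finset.sum_eq_zero_iff_of_nonneg fun _ _ => sq_nonneg _] at hquad
    have hα : α = 0 := eq_zero_of_forall_dotProduct_eq_zero hspan fun i =>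
      pow_eq_zero_iff two_ne_zero |>.1 (hquad i (Finset.mem_univ i))
    have hδa0 : (fun p : V × ι => α p.2) = 0 := by rw [hα]; rfl
    rw [hδa0, mulVec_zero, zero_add] at hsum
    exact ⟨hδa0, (hLK δb).1 hsum⟩
  · rintro ⟨rfl, η, rfl⟩
    simpa using (hLK _).2 ⟨η, rfl⟩

theorem finrank_ker_mulVecLin_eq_card {R m A V ι : Type*} [Field R] [Fintype A] [Fintype V]
    [Nonempty V] [Fintype ι] (M : Matrix m (A ⊕ (V × ι)) R)
    (hker : ∀ δa δb, M *ᵥ Sum.elim δa δb = 0 ↔ δa = 0 ∧ ∃ η : ι → R, δb = fun p => η p.2) :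
    Module.finrank R (LinearMap.ker M.mulVecLin) = Fintype.card ι := by
  obtain ⟨v⟩ := ‹Nonempty V›
  let Φ : (ι → R) →ₗ[R] (A ⊕ (V × ι) → R) :=
    LinearMap.pi (Sum.elim (fun _ => 0) fun p => LinearMap.proj p.2)
  have hΦ : LinearMap.ker M.mulVecLin = LinearMap.range Φ := by
    ext x
    obtain ⟨xa, xb, rfl⟩ : ∃ xa xb, x = Sum.elim xa xb := ⟨_, _, (Sum.elim_comp_inl_inr x).symm⟩
    rw [LinearMap.mem_ker, mulVecLin_apply, hker]
    constructor
    · rintro ⟨rfl, η, rfl⟩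
      exact ⟨η, by ext (_ | _) <;> rfl⟩
    · rintro ⟨η, hη⟩
      exact ⟨funext fun a => (congr_fun hη (.inl a)).symm, η,
        funext fun p => (congr_fun hη (.inr p)).symm⟩
  have hinj : Function.Injective Φ := fun η ξ hηξ => funext fun k => congr_fun hηξ (Sum.inr (v, k))
  rw [hΦ, LinearMap.finrank_range_of_inj hinj, Module.finrank_fintype_fun_eq_card]

/-- For the Laplacian `L` of a connected graph and `h i` spanning `ℝ^m`, any
`δ = [δ_a; δ_b]` with `M δ = 0` (`M = [[-H̃, -L⊗I_m],[L⊗I_m, 0]]`) satisfies `δ_a = 0`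
and `δ_b = 1 ⊗ η` for some `η`; in particular `ker M` has dimension `m`. -/
theorem stmt_8 {N m : ℕ} (G : SimpleGraph (Fin N)) [DecidableRel G.Adj]
    (hG : G.Connected) (h : Fin N → Fin m → ℝ)
    (hspan : Submodule.span ℝ (Set.range h) = ⊤)
    (Htil : Matrix (Fin N × Fin m) (Fin N × Fin m) ℝ)
    (hHtil : ∀ p q : Fin N × Fin m,
      Htil p q = if p.1 = q.1 then h p.1 p.2 * h p.1 q.2 else 0)
    (M : Matrix ((Fin N × Fin m) ⊕ (Fin N × Fin m))
          ((Fin N × Fin m) ⊕ (Fin N × Fin m)) ℝ)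
    (hM : M = Matrix.fromBlocks (-Htil)
        (-((G.lapMatrix ℝ) ⊗ₖ (1 : Matrix (Fin m) (Fin m) ℝ)))
        ((G.lapMatrix ℝ) ⊗ₖ (1 : Matrix (Fin m) (Fin m) ℝ)) 0) :
    (∀ δa δb : Fin N × Fin m → ℝ, M.mulVec (Sum.elim δa δb) = 0 →
      δa = 0 ∧ ∃ η : Fin m → ℝ, δb = fun p => η p.2) ∧
    Module.finrank ℝ (LinearMap.ker M.mulVecLin) = m := by
  have hker := hM ▸ fromBlocks_lapMatrix_kronecker_mulVec_eq_zero_iff hG hspan hHtil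
  have := hG.nonempty
  exact ⟨fun δa δb => (hker δa δb).1,
    (finrank_ker_mulVecLin_eq_card M hker).trans (Fintype.card_fin m)⟩
end

section
/- Let M be a real square matrix with Re(λ) < 0 for all nonzero eigenvalues λ and semisimple zero eigenvalue. Define ε* = min over λ ∈ σ(M) with Re(λ) ≠ 0 of (−2Re(λ)/|λ|²). Then for all 0 < ε < ε*, every eigenvalue μ of I + εM satisfies |μ| < 1 unless μ = 1, and the eigenvalue 1 of I + εM is semisimple with eigenspace equal to ker M. -/
/-!
The eigenvalues of `I + εM` are the numbers `1 + ελ`, `λ ∈ σ(M)`, and for `λ ≠ 0`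
`|1 + ελ|² = 1 + ε (2 Re λ + ε |λ|²) < 1` exactly when `ε |λ|² < -2 Re λ`.
For the eigenvalue `1`: the characteristic polynomial of `I + εM` is that of `M` after the
affine substitution `t ↦ (t - 1)/ε` (up to a unit), so the algebraic multiplicity of `1` for
`I + εM` is that of `0` for `M`, while `(I + εM)x = x` iff `Mx = 0`.
-/

open Polynomial

theorem Complex.norm_one_add_mul_lt_one {ε : ℝ} {z : ℂ} (hε : 0 < ε) (hz : z ≠ 0)
    (h : ε < -(2 * z.re) / Complex.normSq z) : ‖1 + ε * z‖ < 1 := by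
  have hmul : ε * Complex.normSq z < -(2 * z.re) :=
    (lt_div_iff₀ (Complex.normSq_pos.mpr hz)).mp h
  have hsq : Complex.normSq (1 + ε * z) = 1 + ε * (2 * z.re + ε * Complex.normSq z) := by
    simp only [Complex.normSq_apply, Complex.add_re, Complex.add_im, Complex.mul_re,
      Complex.mul_im, Complex.ofReal_re, Complex.ofReal_im, Complex.one_re, Complex.one_im]
    ring
  rw [← sq_lt_one_iff₀ (norm_nonneg _), ← Complex.normSq_eq_norm_sq, hsq]
  nlinarith

theorem spectrum.one_add_smul_eq {K A : Type*} [Field K] [Ring A] [Algebra K A] (a : A) {c : K}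
    (hc : c ≠ 0) : spectrum K (1 + c • a) = (fun x => 1 + c * x) '' spectrum K a := by
  have hsmul : c • a = Units.mk0 c hc • a := rfl
  rw [← map_one (algebraMap K A), ← spectrum.singleton_add_eq, hsmul,
    spectrum.unit_smul_eq_smul, Set.singleton_add, ← Set.image_smul, Set.image_image]
  rfl

namespace Matrix

variable {K m : Type*} [Field K] [Fintype m] [DecidableEq m]

theorem charpoly_smul (A : Matrix m m K) {c : K} (hc : c ≠ 0) :
    (c • A).charpoly = C (c ^ Fintype.card m) * A.charpoly.comp (C c⁻¹ * X) := by
  rw [charpoly, charpoly, ← coe_compRingHom_apply, RingHom.map_det, map_pow, ← det_smul]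
  congr 1
  refine Matrix.ext fun i j => ?_
  by_cases hij : i = j
  · subst hij
    have hcc : C c * C c⁻¹ = (1 : K[X]) := by rw [← C_mul, mul_inv_cancel₀ hc, C_1]
    simp [mul_sub, ← mul_assoc, hcc]
  · simp [hij]

theorem rootMultiplicity_zero_charpoly_smul (A : Matrix m m K) {c : K} (hc : c ≠ 0) :
    (c • A).charpoly.rootMultiplicity 0 = A.charpoly.rootMultiplicity 0 := by
  have hcomp := rootMultiplicity_comp_C_mul_X_add_C A.charpoly c⁻¹ 0 0
    (isUnit_iff_ne_zero.mpr (inv_ne_zero hc))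
  simp only [map_zero, add_zero, mul_zero] at hcomp
  rw [charpoly_smul A hc, rootMultiplicity_mul, rootMultiplicity_C, hcomp, zero_add]
  exact mul_ne_zero (C_ne_zero.mpr (pow_ne_zero _ hc))
    ((comp_C_mul_X_eq_zero_iff (mem_nonZeroDivisors_of_ne_zero (inv_ne_zero hc))).not.mpr
      A.charpoly_monic.ne_zero)

theorem rootMultiplicity_one_charpoly_one_add_smul (A : Matrix m m K) {c : K} (hc : c ≠ 0) :
    (1 + c • A).charpoly.rootMultiplicity 1 = A.charpoly.rootMultiplicity 0 := by
  have hshift : 1 + c • A - scalar m (1 : K) = c • A := by simp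
  rw [rootMultiplicity_eq_rootMultiplicity, ← charpoly_sub_scalar, hshift,
    rootMultiplicity_zero_charpoly_smul A hc]

theorem eigenspace_mulVecLin_one_add_smul (A : Matrix m m K) {c : K} (hc : c ≠ 0) :
    Module.End.eigenspace (1 + c • A).mulVecLin 1 = LinearMap.ker A.mulVecLin := by
  ext x
  simp [hc]

end Matrix

/-- Let `M` have all nonzero eigenvalues with negative real part and semisimple zero
eigenvalue. If `0 < ε` and `ε < -2 Re λ / |λ|²` for every eigenvalue `λ` with `Re λ ≠ 0`
(i.e. `ε < ε*`), then every eigenvalue `μ ≠ 1` of `I + ε M` satisfies `|μ| < 1`, and the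
eigenvalue `1` of `I + ε M` is semisimple with eigenspace equal to `ker M`. -/
theorem stmt_12 {n : ℕ} (M : Matrix (Fin n) (Fin n) ℝ)
    (hstab : ∀ lam ∈ spectrum ℂ (M.map (Complex.ofReal)), lam ≠ 0 → lam.re < 0)
    (hsemi : (Matrix.charpoly (M.map (Complex.ofReal))).rootMultiplicity 0 =
      Module.finrank ℂ (LinearMap.ker (Matrix.mulVecLin (M.map (Complex.ofReal)))))
    (ε : ℝ) (hε : 0 < ε)
    (hεstar : ∀ lam ∈ spectrum ℂ (M.map (Complex.ofReal)), lam.re ≠ 0 →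
      ε < -(2 * lam.re) / Complex.normSq lam) :
    (∀ μ ∈ spectrum ℂ ((1 + ε • M).map (Complex.ofReal)), μ ≠ 1 → ‖μ‖ < 1) ∧
    (Matrix.charpoly ((1 + ε • M).map (Complex.ofReal))).rootMultiplicity 1 =
      Module.finrank ℂ
        (Module.End.eigenspace (Matrix.mulVecLin ((1 + ε • M).map (Complex.ofReal))) 1) ∧
    Module.End.eigenspace (Matrix.mulVecLin (1 + ε • M)) 1 = LinearMap.ker M.mulVecLin := by
  have hmap : (1 + ε • M).map Complex.ofReal = 1 + (ε : ℂ) • M.map Complex.ofReal := by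
    simp [Matrix.map_add, Matrix.map_smul]
  have hε' : (ε : ℂ) ≠ 0 := Complex.ofReal_ne_zero.mpr hε.ne'
  refine ⟨?_, ?_, Matrix.eigenspace_mulVecLin_one_add_smul M hε.ne'⟩
  · rintro μ hμ hμ1
    rw [hmap, spectrum.one_add_smul_eq _ hε'] at hμ
    obtain ⟨lam, hlam, rfl⟩ := hμ
    have hlam0 : lam ≠ 0 := by rintro rfl; simp at hμ1
    exact Complex.norm_one_add_mul_lt_one hε hlam0 (hεstar lam hlam (hstab lam hlam hlam0).ne)
  · rw [hmap, Matrix.rootMultiplicity_one_charpoly_one_add_smul _ hε',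
      Matrix.eigenspace_mulVecLin_one_add_smul _ hε', hsemi]
end
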